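/- arXiv:2403.12908 — 2 statements merged into one kernel-verified Lean document; each statement's English description precedes it below -/
import Mathlib

section
/- Let Ŝ be Hermitian positive semidefinite and λ > 0. Then Θ̂ := (Ŝ + λI)^{-1} is the unique minimiser over Hermitian positive definite matrices Θ of the function F(Θ) = −log det(Θ) + tr(ŜΘ) + λ tr(Θ). -/
open Matrix
open scoped ComplexOrder

/-- The ridge-penalised Whittle objective
`F(Θ) = −log det Θ + tr(ŜΘ) + λ tr Θ` (all quantities real for Hermitian `Θ`). -/
noncomputable def ridgeObjective {p : ℕ} (Shat : Matrix (Fin p) (Fin p) ℂ) (l : ℝ)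
    (Θ : Matrix (Fin p) (Fin p) ℂ) : ℝ :=
  -Real.log (Θ.det.re) + ((Shat * Θ).trace).re + l * (Θ.trace).re

lemma ridge_aux_log_lt {x : ℝ} (hx : 0 < x) (hx1 : x ≠ 1) : Real.log x < x - 1 := by
  have h : Real.log x ≠ 0 := Real.log_ne_zero_of_pos_of_ne_one hx hx1
  have := Real.add_one_lt_exp h
  rw [Real.exp_log hx] at this
  linarith

lemma ridge_aux_trace {p : ℕ} {M : Matrix (Fin p) (Fin p) ℂ} (hM : M.IsHermitian) :
    M.trace = ∑ i, (hM.eigenvalues i : ℂ) := by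
  conv_lhs => rw [hM.spectral_theorem]
  rw [Unitary.conjStarAlgAut_apply, trace_mul_cycle, (Matrix.mem_unitaryGroup_iff').mp (hM.eigenvectorUnitary).2, one_mul,
    trace_diagonal]
  rfl

lemma ridge_aux_det {p : ℕ} {M : Matrix (Fin p) (Fin p) ℂ} (hM : M.PosDef) :
    M.det = (M.det.re : ℂ) ∧ 0 < M.det.re := by
  have h := hM.det_pos
  rw [Complex.lt_def] at h
  exact ⟨Complex.ext rfl (by simp [← h.2]), h.1⟩

lemma ridge_aux_key {p : ℕ} {M : Matrix (Fin p) (Fin p) ℂ} (hM : M.PosDef) (hne : M ≠ 1) :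
    (p : ℝ) < M.trace.re - Real.log M.det.re := by
  set μ := hM.1.eigenvalues with hμ
  have hpos : ∀ i, 0 < μ i := hM.eigenvalues_pos
  have htr : M.trace.re = ∑ i, μ i := by
    rw [ridge_aux_trace hM.1, Complex.re_sum]
    simp
    rfl
  have hdet : M.det.re = ∏ i, μ i := by
    have := hM.1.det_eq_prod_eigenvalues
    rw [this]; norm_cast
  have hlog : Real.log (M.det.re) = ∑ i, Real.log (μ i) := by
    rw [hdet, Real.log_prod fun i _ => (hpos i).ne']
  -- some eigenvalue ≠ 1
  have hex : ∃ i, μ i ≠ 1 := by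
    by_contra h
    push_neg at h
    apply hne
    have hdiag : Matrix.diagonal (RCLike.ofReal ∘ μ : Fin p → ℂ) = 1 := by
      ext i k
      by_cases hik : i = k <;>
        simp [Matrix.diagonal_apply, Matrix.one_apply, hik, h]
    calc M = _ := hM.1.spectral_theorem
    _ = 1 := by
        rw [hdiag, Unitary.conjStarAlgAut_apply, mul_one, (Matrix.mem_unitaryGroup_iff).mp (hM.1.eigenvectorUnitary).2]
  obtain ⟨j, hj⟩ := hex
  rw [htr, hlog]
  have : (p : ℝ) = ∑ _i : Fin p, (1 : ℝ) := by simp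
  rw [this, ← Finset.sum_sub_distrib]
  refine Finset.sum_lt_sum (fun i _ => ?_) ⟨j, Finset.mem_univ j, ?_⟩
  · have := Real.log_le_sub_one_of_pos (hpos i)
    linarith
  · have := ridge_aux_log_lt (hpos j) hj
    linarith


/-- For Hermitian positive semidefinite `Ŝ` and `λ > 0`, `Θ̂ = (Ŝ + λI)⁻¹` is
the unique minimiser of the ridge-penalised objective over Hermitian positive
definite matrices. -/
theorem ridge_unique_minimiser {p : ℕ} (Shat : Matrix (Fin p) (Fin p) ℂ)
    (hS : Shat.PosSemidef) (l : ℝ) (hl : 0 < l) :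
    ((Shat + l • (1 : Matrix (Fin p) (Fin p) ℂ))⁻¹).PosDef
    ∧ ∀ Θ : Matrix (Fin p) (Fin p) ℂ, Θ.PosDef →
        Θ ≠ (Shat + l • (1 : Matrix (Fin p) (Fin p) ℂ))⁻¹ →
        ridgeObjective Shat l ((Shat + l • (1 : Matrix (Fin p) (Fin p) ℂ))⁻¹)
          < ridgeObjective Shat l Θ := by
  set A := Shat + l • (1 : Matrix (Fin p) (Fin p) ℂ) with hAdef
  have h1pd : (l • (1 : Matrix (Fin p) (Fin p) ℂ)).PosDef := by
    have heq : l • (1 : Matrix (Fin p) (Fin p) ℂ) = diagonal (fun _ => (l : ℂ)) := by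
      ext i k
      by_cases hik : i = k <;>
        simp [Matrix.diagonal_apply, Matrix.one_apply, hik, Complex.real_smul]
    rw [heq]
    exact .diagonal fun i => by
      rw [Complex.lt_def]; constructor <;> simp [hl]
  have hA : A.PosDef := Matrix.PosDef.posSemidef_add hS h1pd
  have hdetA : A.det ≠ 0 := hA.det_pos.ne'
  obtain ⟨hAdet_eq, hAdet_pos⟩ := ridge_aux_det hA
  refine ⟨hA.inv, fun Θ hΘ hne => ?_⟩
  obtain ⟨hΘdet_eq, hΘdet_pos⟩ := ridge_aux_det hΘ
  open MatrixOrder in set B := CFC.sqrt A with hBdef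
  open MatrixOrder in have hBpsd : B.PosSemidef := nonneg_iff_posSemidef.mp (CFC.sqrt_nonneg A)
  open MatrixOrder in have hBB : B * B = A := CFC.sqrt_mul_sqrt_self A hA.posSemidef.nonneg
  have hBherm : B.IsHermitian := hBpsd.1
  have hdetB : B.det ≠ 0 := by
    intro h
    apply hdetA
    rw [← hBB, det_mul, h, zero_mul]
  have hBunit : IsUnit B := (isUnit_iff_isUnit_det _).mpr hdetB.isUnit
  set M := B * Θ * B with hMdef
  have hMpd : M.PosDef := by
    refine PosDef.of_dotProduct_mulVec_pos ?_ ?_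
    · show (B * Θ * B)ᴴ = B * Θ * B
      simp [conjTranspose_mul, hBherm.eq, hΘ.1.eq, mul_assoc]
    · intro x hx
      have hy : B *ᵥ x ≠ 0 := by
        intro h
        exact hx ((mulVec_injective_iff_isUnit.mpr hBunit) (by simp [h]))
      have h := hΘ.dotProduct_mulVec_pos hy
      rw [star_mulVec, hBherm.eq, ← dotProduct_mulVec, mulVec_mulVec, mulVec_mulVec] at h
      exact h
  obtain ⟨hMdet_eq, hMdet_pos⟩ := ridge_aux_det hMpd
  have htraceM : M.trace = (A * Θ).trace := by
    rw [hMdef, trace_mul_cycle, hBB]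
  have hdetM : M.det = A.det * Θ.det := by
    have h : B.det * B.det = A.det := by rw [← det_mul, hBB]
    calc M.det = B.det * Θ.det * B.det := by rw [hMdef, det_mul, det_mul]
    _ = B.det * B.det * Θ.det := by ring
    _ = A.det * Θ.det := by rw [h]
  have hdetMre : M.det.re = A.det.re * Θ.det.re := by
    have h : M.det = ((A.det.re * Θ.det.re : ℝ) : ℂ) := by
      rw [hdetM]
      conv_lhs => rw [hAdet_eq, hΘdet_eq]
      norm_cast
    rw [h, Complex.ofReal_re]
  have hMne1 : M ≠ 1 := by
    intro h
    apply hne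
    have h1 : B * (Θ * B) = 1 := by rw [← mul_assoc]; exact h
    have h2 : B⁻¹ = Θ * B := inv_eq_right_inv h1
    have h3 : Θ = B⁻¹ * B⁻¹ := by
      calc Θ = Θ * (B * B⁻¹) := by rw [Matrix.mul_nonsing_inv _ hdetB.isUnit, mul_one]
      _ = (Θ * B) * B⁻¹ := by rw [mul_assoc]
      _ = B⁻¹ * B⁻¹ := by rw [← h2]
    rw [h3, ← Matrix.mul_inv_rev, hBB]
  have hobj : ∀ X : Matrix (Fin p) (Fin p) ℂ,
      ridgeObjective Shat l X = -Real.log X.det.re + ((A * X).trace).re := by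
    intro X
    rw [ridgeObjective, hAdef, Matrix.add_mul, trace_add, Matrix.smul_mul, Matrix.one_mul,
      trace_smul, Complex.add_re]
    have h : (l • X.trace).re = l * X.trace.re := by simp [Complex.real_smul]
    rw [h]; ring
  have hAinvdet : (A⁻¹).det.re = (A.det.re)⁻¹ := by
    have h : (A⁻¹).det = ((A.det.re)⁻¹ : ℝ) := by
      rw [det_nonsing_inv, Ring.inverse_eq_inv']
      conv_lhs => rw [hAdet_eq]
      norm_cast
    rw [h, Complex.ofReal_re]
  have htr1 : ((A * A⁻¹).trace).re = (p : ℝ) := by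
    rw [Matrix.mul_nonsing_inv _ hdetA.isUnit, trace_one]
    simp
  have hkey := ridge_aux_key hMpd hMne1
  rw [hobj Θ, hobj A⁻¹, hAinvdet, htr1, Real.log_inv]
  have htrM : ((A * Θ).trace).re = M.trace.re := by rw [htraceM]
  have hlogM : Real.log M.det.re = Real.log A.det.re + Real.log Θ.det.re := by
    rw [hdetMre, Real.log_mul hAdet_pos.ne' hΘdet_pos.ne']
  rw [htrM]
  linarith
end

section
/- Suppose vectors/matrices satisfy the linear relation Z̃_{M^⊥} = (1/λ)(R_{M^⊥} − W_{M^⊥}) − (1/λ) Γ_{M^⊥M} Γ_{MM}^{-1}(R_M − W_M) + Γ_{M^⊥M} Γ_{MM}^{-1} Z̃_M, where the incoherence bound |||Γ_{M^⊥M} Γ_{MM}^{-1}|||_∞ ≤ 1 − α holds for some α ∈ (0,1], ‖Z̃_M‖_∞ ≤ 1, and max{‖W‖_∞, ‖R‖_∞} ≤ αλ/8 with λ > 0. Then ‖Z̃_{M^⊥}‖_∞ ≤ (2−α)/λ · (αλ/4) + (1−α) < 1. -/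
open Matrix

lemma le_fin_ciSup {ι : Type*} [Finite ι] (f : ι → ℝ) (j : ι) : f j ≤ ⨆ i, f i :=
  le_ciSup (Set.Finite.bddAbove (Set.finite_range f)) j

lemma mulVec_entry_bound {ι₁ ι₂ : Type*} [Fintype ι₁] (A : Matrix ι₂ ι₁ ℂ)
    (v : ι₁ → ℂ) (i : ι₂) (C : ℝ) (hC : 0 ≤ C) (hv : ∀ j, ‖v j‖ ≤ C) :
    ‖(A *ᵥ v) i‖ ≤ (∑ j : ι₁, ‖A i j‖) * C := by
  calc ‖(A *ᵥ v) i‖ = ‖∑ j, A i j * v j‖ := rfl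
    _ ≤ ∑ j, ‖A i j * v j‖ := norm_sum_le _ _
    _ ≤ ∑ j, ‖A i j‖ * C := by
        refine Finset.sum_le_sum fun j _ => ?_
        rw [norm_mul]
        exact mul_le_mul_of_nonneg_left (hv j) (norm_nonneg _)
    _ = (∑ j : ι₁, ‖A i j‖) * C := by rw [Finset.sum_mul]

/-- Strict dual feasibility in the primal–dual witness argument: given the
block relation for `Z̃_{M⊥}`, the incoherence bound
`|||Γ_{M⊥M}Γ_{MM}⁻¹|||_∞ ≤ 1−α`, `‖Z̃_M‖_∞ ≤ 1`, and
`max{‖W‖_∞, ‖R‖_∞} ≤ αλ/8`, we get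
`‖Z̃_{M⊥}‖_∞ ≤ ((2−α)/λ)(αλ/4) + (1−α) < 1`. -/
theorem strict_dual_feasibility {ι₁ ι₂ : Type*} [Fintype ι₁] [Fintype ι₂] [DecidableEq ι₁]
    (Γ₂₁ : Matrix ι₂ ι₁ ℂ) (Γ₁₁ : Matrix ι₁ ι₁ ℂ) (hΓ : IsUnit Γ₁₁)
    (Z₁ R₁ W₁ : ι₁ → ℂ) (Z₂ R₂ W₂ : ι₂ → ℂ)
    (α lam : ℝ) (hα : α ∈ Set.Ioc (0 : ℝ) 1) (hlam : 0 < lam)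
    (hrel : Z₂ = (1 / lam : ℂ) • (R₂ - W₂)
        - (1 / lam : ℂ) • ((Γ₂₁ * Γ₁₁⁻¹) *ᵥ (R₁ - W₁))
        + (Γ₂₁ * Γ₁₁⁻¹) *ᵥ Z₁)
    (hincoh : (⨆ i : ι₂, ∑ j : ι₁, ‖(Γ₂₁ * Γ₁₁⁻¹) i j‖) ≤ 1 - α)
    (hZ₁ : (⨆ i : ι₁, ‖Z₁ i‖) ≤ 1)
    (hW₁ : (⨆ i : ι₁, ‖W₁ i‖) ≤ α * lam / 8)
    (hW₂ : (⨆ i : ι₂, ‖W₂ i‖) ≤ α * lam / 8)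
    (hR₁ : (⨆ i : ι₁, ‖R₁ i‖) ≤ α * lam / 8)
    (hR₂ : (⨆ i : ι₂, ‖R₂ i‖) ≤ α * lam / 8) :
    (⨆ i : ι₂, ‖Z₂ i‖) ≤ (2 - α) / lam * (α * lam / 4) + (1 - α)
    ∧ (2 - α) / lam * (α * lam / 4) + (1 - α) < 1 := by
  obtain ⟨hα0, hα1⟩ := hα
  have hrhs : (2 - α) / lam * (α * lam / 4) + (1 - α) = (2 - α) * α / 4 + (1 - α) := by
    field_simp
  have hlt : (2 - α) / lam * (α * lam / 4) + (1 - α) < 1 := by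
    rw [hrhs]; nlinarith
  refine ⟨?_, hlt⟩
  have hrhs0 : (0 : ℝ) ≤ (2 - α) / lam * (α * lam / 4) + (1 - α) := by
    rw [hrhs]; nlinarith
  rcases isEmpty_or_nonempty ι₂ with hE | hN
  · simpa [Real.iSup_of_isEmpty] using hrhs0
  set A := Γ₂₁ * Γ₁₁⁻¹
  refine ciSup_le fun i => ?_
  -- pointwise bounds
  have hrow : (∑ j : ι₁, ‖A i j‖) ≤ 1 - α :=
    le_trans (le_fin_ciSup (fun i : ι₂ => ∑ j : ι₁, ‖A i j‖) i) hincoh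
  have hrow0 : (0 : ℝ) ≤ ∑ j : ι₁, ‖A i j‖ :=
    Finset.sum_nonneg fun j _ => norm_nonneg _
  have hZ1p : ∀ j, ‖Z₁ j‖ ≤ 1 := fun j =>
    le_trans (le_fin_ciSup (fun i => ‖Z₁ i‖) j) hZ₁
  have hRW1 : ∀ j, ‖(R₁ - W₁) j‖ ≤ α * lam / 4 := fun j => by
    have h1 : ‖R₁ j‖ ≤ α * lam / 8 :=
      le_trans (le_fin_ciSup (fun i => ‖R₁ i‖) j) hR₁
    have h2 : ‖W₁ j‖ ≤ α * lam / 8 :=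
      le_trans (le_fin_ciSup (fun i => ‖W₁ i‖) j) hW₁
    calc ‖(R₁ - W₁) j‖ = ‖R₁ j - W₁ j‖ := rfl
      _ ≤ ‖R₁ j‖ + ‖W₁ j‖ := norm_sub_le _ _
      _ ≤ α * lam / 4 := by linarith
  have hR2i : ‖R₂ i‖ ≤ α * lam / 8 :=
    le_trans (le_fin_ciSup (fun i => ‖R₂ i‖) i) hR₂
  have hW2i : ‖W₂ i‖ ≤ α * lam / 8 :=
    le_trans (le_fin_ciSup (fun i => ‖W₂ i‖) i) hW₂
  have hb1 : ‖(A *ᵥ (R₁ - W₁)) i‖ ≤ (1 - α) * (α * lam / 4) := by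
    calc ‖(A *ᵥ (R₁ - W₁)) i‖ ≤ (∑ j : ι₁, ‖A i j‖) * (α * lam / 4) :=
          mulVec_entry_bound A _ i _ (by nlinarith) hRW1
      _ ≤ (1 - α) * (α * lam / 4) :=
          mul_le_mul_of_nonneg_right hrow (by positivity)
  have hb2 : ‖(A *ᵥ Z₁) i‖ ≤ 1 - α := by
    calc ‖(A *ᵥ Z₁) i‖ ≤ (∑ j : ι₁, ‖A i j‖) * 1 :=
          mulVec_entry_bound A _ i _ zero_le_one hZ1p
      _ ≤ 1 - α := by nlinarith
  have hZ2i : Z₂ i = (1 / lam : ℂ) * (R₂ i - W₂ i)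
      - (1 / lam : ℂ) * (A *ᵥ (R₁ - W₁)) i + (A *ᵥ Z₁) i := by
    rw [hrel]; simp [A]
  rw [hZ2i]
  have hnlam : ‖(1 / lam : ℂ)‖ = 1 / lam := by
    rw [norm_div, norm_one, Complex.norm_real, Real.norm_of_nonneg hlam.le]
  calc ‖(1 / lam : ℂ) * (R₂ i - W₂ i) - (1 / lam : ℂ) * (A *ᵥ (R₁ - W₁)) i + (A *ᵥ Z₁) i‖
      ≤ ‖(1 / lam : ℂ) * (R₂ i - W₂ i) - (1 / lam : ℂ) * (A *ᵥ (R₁ - W₁)) i‖ + ‖(A *ᵥ Z₁) i‖ :=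
        norm_add_le _ _
    _ ≤ ‖(1 / lam : ℂ) * (R₂ i - W₂ i)‖ + ‖(1 / lam : ℂ) * (A *ᵥ (R₁ - W₁)) i‖ + ‖(A *ᵥ Z₁) i‖ := by
        have := norm_sub_le ((1 / lam : ℂ) * (R₂ i - W₂ i)) ((1 / lam : ℂ) * (A *ᵥ (R₁ - W₁)) i)
        linarith
    _ ≤ (1 / lam) * (α * lam / 4) + (1 / lam) * ((1 - α) * (α * lam / 4)) + (1 - α) := by
        have h1 : ‖(1 / lam : ℂ) * (R₂ i - W₂ i)‖ ≤ (1 / lam) * (α * lam / 4) := by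
          rw [norm_mul, hnlam]
          have : ‖R₂ i - W₂ i‖ ≤ α * lam / 4 := by
            have := norm_sub_le (R₂ i) (W₂ i); linarith
          have hpos : (0 : ℝ) ≤ 1 / lam := by positivity
          exact mul_le_mul_of_nonneg_left this hpos
        have h2 : ‖(1 / lam : ℂ) * (A *ᵥ (R₁ - W₁)) i‖ ≤ (1 / lam) * ((1 - α) * (α * lam / 4)) := by
          rw [norm_mul, hnlam]
          have hpos : (0 : ℝ) ≤ 1 / lam := by positivity
          exact mul_le_mul_of_nonneg_left hb1 hpos
        linarith
    _ = (2 - α) / lam * (α * lam / 4) + (1 - α) := by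
        field_simp; ring
end
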